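/- Let A be an algebra over a field k with idempotents e₁, e₂ such that the multiplication maps A e_i ⊗_{e_i A e_i} e_i A → A e_i A are bijective for i = 1,2, and suppose we have a chain 0 ⊂ A e₂ A ⊂ A e₁ A ⊂ A with e₂ ∈ e₁ A e₁. Then localisation by e₁ followed by localisation by e₂ agrees with localisation by e₂: for any A-module M, e₂(e₁ M) = e₂ M as e₂ A e₂-modules. Dually, globalisation composes: A e₂ ⊗_{e₂ A e₂} N ≅ A e₁ ⊗_{e₁ A e₁} (e₁ A e₂ ⊗_{e₂ A e₂} N) for any e₂Ae₂-module N. -/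

import Mathlib

/-- The additive subgroup `eAe` of `A`. -/
def cornerSub {A : Type*} [Ring A] (e : A) : AddSubgroup A where
  carrier := {x | e * x = x ∧ x * e = x}
  zero_mem' := by simp
  add_mem' := by
    rintro a b ⟨h1, h2⟩ ⟨h3, h4⟩
    constructor <;> simp [mul_add, add_mul, h1, h2, h3, h4]
  neg_mem' := by
    rintro a ⟨h1, h2⟩
    constructor <;> simp [h1, h2]

/-- The corner ring `eAe` associated to an idempotent `e` of `A`. -/
def Corner {A : Type*} [Ring A] (e : A) (_he : e * e = e) : Type _ := cornerSub e

namespace Corner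

variable {A : Type*} [Ring A] {e : A} {he : e * e = e}

instance : AddCommGroup (Corner e he) := inferInstanceAs (AddCommGroup (cornerSub e))

lemma mem1 (x : Corner e he) : e * x.1 = x.1 := x.2.1
lemma mem2 (x : Corner e he) : x.1 * e = x.1 := x.2.2

instance : Mul (Corner e he) :=
  ⟨fun x y => ⟨x.1 * y.1, by rw [← mul_assoc, mem1], by rw [mul_assoc, mem2]⟩⟩

instance : One (Corner e he) := ⟨⟨e, he, he⟩⟩

@[simp] lemma mul_val (x y : Corner e he) : (x * y).1 = x.1 * y.1 := rfl
@[simp] lemma one_val : (1 : Corner e he).1 = e := rfl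
@[simp] lemma add_val (x y : Corner e he) : (x + y).1 = x.1 + y.1 := rfl
@[simp] lemma zero_val : (0 : Corner e he).1 = 0 := rfl

instance : Ring (Corner e he) := {
  (inferInstance : AddCommGroup (Corner e he)), (inferInstance : Mul (Corner e he)),
  (inferInstance : One (Corner e he)) with
  mul_assoc := fun x y z => Subtype.ext (mul_assoc x.1 y.1 z.1)
  one_mul := fun x => Subtype.ext (mem1 x)
  mul_one := fun x => Subtype.ext (mem2 x)
  left_distrib := fun x y z => Subtype.ext (mul_add x.1 y.1 z.1)
  right_distrib := fun x y z => Subtype.ext (add_mul x.1 y.1 z.1)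
  zero_mul := fun x => Subtype.ext (zero_mul x.1)
  mul_zero := fun x => Subtype.ext (mul_zero x.1) }

end Corner

/-- The additive subgroup `eM` of an `A`-module `M`. -/
def cornerModSub {A : Type*} [Ring A] (e : A) (M : Type*) [AddCommGroup M]
    [Module A M] : AddSubgroup M where
  carrier := {m | e • m = m}
  zero_mem' := by simp
  add_mem' := by
    intro a b h1 h2
    simp only [Set.mem_setOf_eq] at *
    rw [smul_add, h1, h2]
  neg_mem' := by
    intro a h
    simp only [Set.mem_setOf_eq] at *
    rw [smul_neg, h]

/-- The `eAe`-module `eM` associated to an `A`-module `M`. -/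
def CornerMod {A : Type*} [Ring A] (e : A) (he : e * e = e) (M : Type*) [AddCommGroup M]
    [Module A M] : Type _ := cornerModSub e M

namespace CornerMod

variable {A : Type*} [Ring A] {e : A} {he : e * e = e} {M : Type*} [AddCommGroup M] [Module A M]

instance : AddCommGroup (CornerMod e he M) := inferInstanceAs (AddCommGroup (cornerModSub e M))

lemma memMod (m : CornerMod e he M) : e • m.1 = m.1 := m.2

instance : SMul (Corner e he) (CornerMod e he M) :=
  ⟨fun x m => ⟨x.1 • m.1, show e • (x.1 • m.1) = x.1 • m.1 by
    rw [← mul_smul, Corner.mem1]⟩⟩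

@[simp] lemma smul_val (x : Corner e he) (m : CornerMod e he M) : (x • m).1 = x.1 • m.1 := rfl

instance : Module (Corner e he) (CornerMod e he M) where
  one_smul m := by apply Subtype.ext; show e • m.1 = m.1; exact m.2
  mul_smul x y m := by apply Subtype.ext; show (x.1 * y.1) • m.1 = x.1 • (y.1 • m.1); exact mul_smul _ _ _
  smul_zero x := by apply Subtype.ext; show x.1 • (0 : M) = 0; exact smul_zero _
  smul_add x m n := by apply Subtype.ext; show x.1 • (m.1 + n.1) = x.1 • m.1 + x.1 • n.1; exact smul_add _ _ _
  add_smul x y m := by apply Subtype.ext; show (x.1 + y.1) • m.1 = x.1 • m.1 + y.1 • m.1; exact add_smul _ _ _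
  zero_smul m := by apply Subtype.ext; show (0 : A) • m.1 = 0; exact zero_smul _ _

end CornerMod
section Bimod

variable {A : Type} [Ring A]

/-- The right module `Ae` as an additive subgroup of `A`. -/
def AeT (e : A) : AddSubgroup A where
  carrier := {x | x * e = x}
  zero_mem' := by simp
  add_mem' := by
    intro a b h1 h2; simp only [Set.mem_setOf_eq] at *; rw [add_mul, h1, h2]
  neg_mem' := by
    intro a h; simp only [Set.mem_setOf_eq] at *; rw [neg_mul, h]

lemma AeT.memAe {e : A} (x : AeT e) : x.1 * e = x.1 := x.2

instance {e : A} : SMul A (AeT e) :=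
  ⟨fun a x => ⟨a * x.1, show (a * x.1) * e = a * x.1 by rw [mul_assoc, AeT.memAe]⟩⟩

@[simp] lemma AeT.smul_val {e : A} (a : A) (x : AeT e) : (a • x).1 = a * x.1 := rfl

instance {e : A} : Module A (AeT e) where
  one_smul x := Subtype.ext (one_mul x.1)
  mul_smul a b x := Subtype.ext (mul_assoc a b x.1)
  smul_zero a := Subtype.ext (mul_zero a)
  smul_add a x y := Subtype.ext (mul_add a x.1 y.1)
  add_smul a b x := Subtype.ext (add_mul a b x.1)
  zero_smul x := Subtype.ext (zero_mul x.1)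

instance {e : A} {he : e * e = e} : SMul (Corner e he)ᵐᵒᵖ (AeT e) :=
  ⟨fun c x => ⟨x.1 * c.unop.1,
    show (x.1 * c.unop.1) * e = x.1 * c.unop.1 by rw [mul_assoc, Corner.mem2]⟩⟩

@[simp] lemma AeT.op_smul_val {e : A} {he : e * e = e} (c : (Corner e he)ᵐᵒᵖ) (x : AeT e) :
    (c • x).1 = x.1 * c.unop.1 := rfl

instance {e : A} {he : e * e = e} : Module (Corner e he)ᵐᵒᵖ (AeT e) where
  one_smul x := Subtype.ext (AeT.memAe x)
  mul_smul c d x := Subtype.ext (mul_assoc x.1 d.unop.1 c.unop.1).symm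
  smul_zero c := Subtype.ext (zero_mul c.unop.1)
  smul_add c x y := Subtype.ext (add_mul x.1 y.1 c.unop.1)
  add_smul c d x := Subtype.ext (mul_add x.1 c.unop.1 d.unop.1)
  zero_smul x := Subtype.ext (mul_zero x.1)

instance {e : A} {he : e * e = e} : SMulCommClass A (Corner e he)ᵐᵒᵖ (AeT e) :=
  ⟨fun a c x => Subtype.ext (mul_assoc a x.1 c.unop.1).symm⟩

/-- The set `pAq` as an additive subgroup of `A`. -/
def Mid (p q : A) : AddSubgroup A where
  carrier := {x | p * x = x ∧ x * q = x}
  zero_mem' := by simp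
  add_mem' := by
    rintro a b ⟨h1, h2⟩ ⟨h3, h4⟩
    exact ⟨by rw [mul_add, h1, h3], by rw [add_mul, h2, h4]⟩
  neg_mem' := by
    rintro a ⟨h1, h2⟩
    exact ⟨by rw [mul_neg, h1], by rw [neg_mul, h2]⟩

lemma Mid.mem1 {p q : A} (x : Mid p q) : p * x.1 = x.1 := x.2.1
lemma Mid.mem2 {p q : A} (x : Mid p q) : x.1 * q = x.1 := x.2.2

instance {p q : A} {hp : p * p = p} : SMul (Corner p hp) (Mid p q) :=
  ⟨fun c x => ⟨c.1 * x.1,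
    show p * (c.1 * x.1) = c.1 * x.1 ∧ (c.1 * x.1) * q = c.1 * x.1 from
      ⟨by rw [← mul_assoc, Corner.mem1], by rw [mul_assoc, Mid.mem2]⟩⟩⟩

@[simp] lemma Mid.smul_val {p q : A} {hp : p * p = p} (c : Corner p hp) (x : Mid p q) :
    (c • x).1 = c.1 * x.1 := rfl

instance {p q : A} {hp : p * p = p} : Module (Corner p hp) (Mid p q) where
  one_smul x := Subtype.ext (Mid.mem1 x)
  mul_smul c d x := Subtype.ext (mul_assoc c.1 d.1 x.1)
  smul_zero c := Subtype.ext (mul_zero c.1)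
  smul_add c x y := Subtype.ext (mul_add c.1 x.1 y.1)
  add_smul c d x := Subtype.ext (add_mul c.1 d.1 x.1)
  zero_smul x := Subtype.ext (zero_mul x.1)

instance {p q : A} {hq : q * q = q} : SMul (Corner q hq)ᵐᵒᵖ (Mid p q) :=
  ⟨fun c x => ⟨x.1 * c.unop.1,
    show p * (x.1 * c.unop.1) = x.1 * c.unop.1 ∧ (x.1 * c.unop.1) * q = x.1 * c.unop.1 from
      ⟨by rw [← mul_assoc, Mid.mem1], by rw [mul_assoc, Corner.mem2]⟩⟩⟩

@[simp] lemma Mid.op_smul_val {p q : A} {hq : q * q = q} (c : (Corner q hq)ᵐᵒᵖ) (x : Mid p q) :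
    (c • x).1 = x.1 * c.unop.1 := rfl

instance {p q : A} {hq : q * q = q} : Module (Corner q hq)ᵐᵒᵖ (Mid p q) where
  one_smul x := Subtype.ext (Mid.mem2 x)
  mul_smul c d x := Subtype.ext (mul_assoc x.1 d.unop.1 c.unop.1).symm
  smul_zero c := Subtype.ext (zero_mul c.unop.1)
  smul_add c x y := Subtype.ext (add_mul x.1 y.1 c.unop.1)
  add_smul c d x := Subtype.ext (mul_add x.1 c.unop.1 d.unop.1)
  zero_smul x := Subtype.ext (mul_zero x.1)

instance {p q : A} {hp : p * p = p} {hq : q * q = q} :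
    SMulCommClass (Corner p hp) (Corner q hq)ᵐᵒᵖ (Mid p q) :=
  ⟨fun c d x => Subtype.ext (mul_assoc c.1 x.1 d.unop.1).symm⟩

end Bimod

section Tensor

/-- A balanced biadditive map out of a pair (right `S`-module `X`, left `S`-module `Y`),
`R`-linear in the first variable. -/
structure IsBalancedTensor (R S : Type) [Ring R] [Ring S]
    (X : Type) [AddCommGroup X] [Module R X] [Module Sᵐᵒᵖ X] [SMulCommClass R Sᵐᵒᵖ X]
    (Y : Type) [AddCommGroup Y] [Module S Y]
    (T : Type) [AddCommGroup T] [Module R T]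
    (β : X → Y → T) : Prop where
  add_left : ∀ x x' y, β (x + x') y = β x y + β x' y
  add_right : ∀ x y y', β x (y + y') = β x y + β x y'
  smul_left : ∀ (r : R) x y, β (r • x) y = r • β x y
  balanced : ∀ (s : S) x y, β ((MulOpposite.op s) • x) y = β x (s • y)

/-- `(T, β)` realises the tensor product `X ⊗_S Y` as a left `R`-module:
`β` is balanced and universal among balanced maps. -/
def IsUnivTensor (R S : Type) [Ring R] [Ring S]
    (X : Type) [AddCommGroup X] [Module R X] [Module Sᵐᵒᵖ X] [SMulCommClass R Sᵐᵒᵖ X]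
    (Y : Type) [AddCommGroup Y] [Module S Y]
    (T : Type) [AddCommGroup T] [Module R T]
    (β : X → Y → T) : Prop :=
  IsBalancedTensor R S X Y T β ∧
    ∀ (T' : Type) [AddCommGroup T'] [Module R T'] (β' : X → Y → T'),
      IsBalancedTensor R S X Y T' β' → ∃! φ : T →ₗ[R] T', ∀ x y, φ (β x y) = β' x y

end Tensor

section Localise

variable {A : Type} [Ring A] {e : A} {he : e * e = e}
variable {M N : Type} [AddCommGroup M] [AddCommGroup N] [Module A M] [Module A N]

/-- The localisation functor on morphisms: restriction of `f : M → N` to `eM → eN`. -/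
def cmap (e : A) (he : e * e = e) (f : M →ₗ[A] N) :
    CornerMod e he M →ₗ[Corner e he] CornerMod e he N where
  toFun m := ⟨f m.1, show e • f m.1 = f m.1 by rw [← map_smul, CornerMod.memMod]⟩
  map_add' m n := Subtype.ext (map_add f m.1 n.1)
  map_smul' c m := Subtype.ext (map_smul f c.1 m.1)

@[simp] lemma cmap_val (f : M →ₗ[A] N) (m : CornerMod e he M) :
    (cmap e he f m).1 = f m.1 := rfl

end Localise

/-! The balanced map `(x, n) ↦ x ⊗ (e₂ ⊗ n)` from `Ae₂ × N` into
`Ae₁ ⊗_{e₁Ae₁} (e₁Ae₂ ⊗_{e₂Ae₂} N)` is itself a universal tensor product, so the two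
globalisations are isomorphic. A balanced `γ` on `Ae₂ × N` restricts to `e₁Ae₂ × N` with values
in `e₁T'`, hence factors through `ρ : e₁Ae₂ ⊗ N → e₁T'`, and `x ⊗ u ↦ x • ρ u` is the required
factorisation. It is unique because `x ⊗ u = x • (e₁ ⊗ u)` and, for `m ∈ e₁Ae₂`,
`e₁ ⊗ (m ⊗ n) = m ⊗ (e₂ ⊗ n)`: `m` can be moved across the outer tensor sign since it lies in
`e₁Ae₁`. Localisation composes simply because `e₁e₂ = e₂`. -/

section Universal

variable {R S : Type} [Ring R] [Ring S]
  {X : Type} [AddCommGroup X] [Module R X] [Module Sᵐᵒᵖ X] [SMulCommClass R Sᵐᵒᵖ X]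
  {Y : Type} [AddCommGroup Y] [Module S Y]
  {T T' : Type} [AddCommGroup T] [Module R T] [AddCommGroup T'] [Module R T']
  {β : X → Y → T} {β' : X → Y → T'}

lemma IsBalancedTensor.linearMap_comp (hβ : IsBalancedTensor R S X Y T β) (f : T →ₗ[R] T') :
    IsBalancedTensor R S X Y T' (fun x y => f (β x y)) where
  add_left x x' y := by rw [hβ.add_left, map_add]
  add_right x y y' := by rw [hβ.add_right, map_add]
  smul_left r x y := by rw [hβ.smul_left, map_smul]
  balanced s x y := by rw [hβ.balanced]

namespace IsUnivTensor

lemma hom_ext (hT : IsUnivTensor R S X Y T β) {f g : T →ₗ[R] T'}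
    (h : ∀ x y, f (β x y) = g (β x y)) : f = g :=
  (hT.2 T' _ (hT.1.linearMap_comp g)).unique h fun _ _ => rfl

noncomputable def lift (hT : IsUnivTensor R S X Y T β)
    (hβ' : IsBalancedTensor R S X Y T' β') : T →ₗ[R] T' :=
  (hT.2 T' β' hβ').exists.choose

@[simp] lemma lift_apply (hT : IsUnivTensor R S X Y T β)
    (hβ' : IsBalancedTensor R S X Y T' β') (x : X) (y : Y) : hT.lift hβ' (β x y) = β' x y :=
  (hT.2 T' β' hβ').exists.choose_spec x y

noncomputable def linearEquiv (hT : IsUnivTensor R S X Y T β)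
    (hT' : IsUnivTensor R S X Y T' β') : T ≃ₗ[R] T' :=
  LinearEquiv.ofLinearMap (hT.lift hT'.1) (hT'.lift hT.1)
    (hT'.hom_ext fun x y => by simp) (hT.hom_ext fun x y => by simp)

end IsUnivTensor

end Universal

section CornerTensor

variable {A : Type} [Ring A]

lemma mul_mul_mem_cornerSub {e : A} (he : e * e = e) (y : A) : e * y * e ∈ cornerSub e :=
  ⟨by rw [← mul_assoc, ← mul_assoc, he], by rw [mul_assoc, he]⟩

lemma cornerModSub_le_of_mul_eq {e₁ e₂ : A} (h : e₁ * e₂ = e₂) (M : Type) [AddCommGroup M]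
    [Module A M] : cornerModSub e₂ M ≤ cornerModSub e₁ M := fun m (hm : e₂ • m = m) =>
  show e₁ • m = m by rw [← hm, ← mul_smul, h]

def AeT.self {e : A} (he : e * e = e) : AeT e := ⟨e, he⟩

variable {e : A} {he : e * e = e}
  {Y : Type} [AddCommGroup Y] [Module (Corner e he) Y]
  {T : Type} [AddCommGroup T] [Module A T] {β : AeT e → Y → T}

lemma AeT.eq_smul_self (x : AeT e) : x = x.1 • AeT.self he :=
  Subtype.ext (AeT.memAe x).symm

lemma AeT.op_smul_self (c : Corner e he) :
    MulOpposite.op c • AeT.self he = c.1 • AeT.self he :=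
  Subtype.ext ((Corner.mem1 c).trans (Corner.mem2 c).symm)

namespace IsBalancedTensor

lemma apply_eq_smul_self (hβ : IsBalancedTensor A (Corner e he) (AeT e) Y T β)
    (x : AeT e) (y : Y) : β x y = x.1 • β (AeT.self he) y := by
  rw [← hβ.smul_left, ← AeT.eq_smul_self]

def selfMap (hβ : IsBalancedTensor A (Corner e he) (AeT e) Y T β) :
    Y →ₗ[Corner e he] CornerMod e he T where
  toFun y := ⟨β (AeT.self he) y, (hβ.apply_eq_smul_self (AeT.self he) y).symm⟩
  map_add' y y' := Subtype.ext (hβ.add_right _ _ _)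
  map_smul' c y := Subtype.ext <| by
    show β _ (c • y) = c.1 • β _ y
    rw [← hβ.balanced, AeT.op_smul_self, hβ.smul_left]

@[simp] lemma selfMap_val (hβ : IsBalancedTensor A (Corner e he) (AeT e) Y T β) (y : Y) :
    (hβ.selfMap y).1 = β (AeT.self he) y := rfl

end IsBalancedTensor

lemma IsUnivTensor.hom_ext_self {T' : Type} [AddCommGroup T'] [Module A T']
    (hT : IsUnivTensor A (Corner e he) (AeT e) Y T β) {f g : T →ₗ[A] T'}
    (h : (cmap e he f).comp hT.1.selfMap = (cmap e he g).comp hT.1.selfMap) : f = g :=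
  hT.hom_ext fun x y => by
    rw [hT.1.apply_eq_smul_self, map_smul, map_smul]
    exact congrArg (x.1 • Subtype.val ·) (LinearMap.congr_fun h y)

lemma isBalancedTensor_smul_val (ρ : Y →ₗ[Corner e he] CornerMod e he T) :
    IsBalancedTensor A (Corner e he) (AeT e) Y T (fun x y => x.1 • (ρ y).1) where
  add_left x x' y := add_smul _ _ _
  add_right x y y' := by simp only [map_add]; exact smul_add _ _ _
  smul_left r x y := mul_smul _ _ _
  balanced c x y := by
    simp only [map_smul, AeT.op_smul_val, CornerMod.smul_val]
    exact mul_smul _ _ _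

end CornerTensor

section Restriction

variable {A : Type} [Ring A] {p q : A} {hq : q * q = q}
  {Y : Type} [AddCommGroup Y] [Module (Corner q hq) Y]
  {T : Type} [AddCommGroup T] [Module A T] {γ : AeT q → Y → T}

def Mid.toAeT (m : Mid p q) : AeT q := ⟨m.1, Mid.mem2 m⟩

def IsBalancedTensor.restrictMid (hγ : IsBalancedTensor A (Corner q hq) (AeT q) Y T γ)
    (hp : p * p = p) (m : Mid p q) (y : Y) : CornerMod p hp T :=
  ⟨γ (Mid.toAeT m) y, show p • _ = _ by
    rw [← hγ.smul_left]
    exact congrArg (γ · y) (Subtype.ext (Mid.mem1 m))⟩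

lemma IsBalancedTensor.isBalancedTensor_restrictMid
    (hγ : IsBalancedTensor A (Corner q hq) (AeT q) Y T γ) (hp : p * p = p) :
    IsBalancedTensor (Corner p hp) (Corner q hq) (Mid p q) Y (CornerMod p hp T)
      (hγ.restrictMid hp) where
  add_left m m' y := Subtype.ext (hγ.add_left (Mid.toAeT m) (Mid.toAeT m') y)
  add_right m y y' := Subtype.ext (hγ.add_right (Mid.toAeT m) y y')
  smul_left c m y := Subtype.ext (hγ.smul_left c.1 (Mid.toAeT m) y)
  balanced s m y := Subtype.ext (hγ.balanced s (Mid.toAeT m) y)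

end Restriction

section Nested

variable {A : Type} [Ring A] {e₁ e₂ : A} {h₁ : e₁ * e₁ = e₁} {h₂ : e₂ * e₂ = e₂}

def AeT.inclusion (h : e₂ * e₁ = e₂) : AeT e₂ →ₗ[A] AeT e₁ where
  toFun x := ⟨x.1, show x.1 * e₁ = x.1 by rw [← AeT.memAe x, mul_assoc, h]⟩
  map_add' _ _ := rfl
  map_smul' _ _ := rfl

def Corner.inclusion (h : e₂ ∈ cornerSub e₁) (s : Corner e₂ h₂) : Corner e₁ h₁ :=
  ⟨s.1, by rw [← Corner.mem1 s, ← mul_assoc, h.1], by rw [← Corner.mem2 s, mul_assoc, h.2]⟩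

def Mid.self (h : e₁ * e₂ = e₂) (h₂ : e₂ * e₂ = e₂) : Mid e₁ e₂ := ⟨e₂, h, h₂⟩

def Mid.toCorner (h : e₂ * e₁ = e₂) (m : Mid e₁ e₂) : Corner e₁ h₁ :=
  ⟨m.1, Mid.mem1 m, by rw [← Mid.mem2 m, mul_assoc, h]⟩

lemma AeT.inclusion_op_smul (h : e₂ ∈ cornerSub e₁) (s : Corner e₂ h₂) (x : AeT e₂) :
    AeT.inclusion h.2 (MulOpposite.op s • x) =
      MulOpposite.op (Corner.inclusion (h₁ := h₁) h s) • AeT.inclusion h.2 x :=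
  rfl

lemma Mid.inclusion_smul_self (h : e₂ ∈ cornerSub e₁) (s : Corner e₂ h₂) :
    Corner.inclusion (h₁ := h₁) h s • Mid.self h.1 h₂ = MulOpposite.op s • Mid.self h.1 h₂ :=
  Subtype.ext ((Corner.mem2 s).trans (Corner.mem1 s).symm)

lemma Mid.toCorner_smul_self (h : e₂ ∈ cornerSub e₁) (m : Mid e₁ e₂) :
    Mid.toCorner (h₁ := h₁) h.2 m • Mid.self h.1 h₂ = m :=
  Subtype.ext (Mid.mem2 m)

lemma AeT.op_toCorner_smul_self (h : e₂ * e₁ = e₂) (m : Mid e₁ e₂) :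
    MulOpposite.op (Mid.toCorner (h₁ := h₁) h m) • AeT.self h₁ = AeT.inclusion h (Mid.toAeT m) :=
  Subtype.ext (Mid.mem1 m)

variable {N : Type} [AddCommGroup N] [Module (Corner e₂ h₂) N]
  {U : Type} [AddCommGroup U] [Module (Corner e₁ h₁) U] {βU : Mid e₁ e₂ → N → U}
  {T : Type} [AddCommGroup T] [Module A T] {β₁ : AeT e₁ → U → T}

def nestedTensor (h : e₂ ∈ cornerSub e₁) (h₂ : e₂ * e₂ = e₂) (β₁ : AeT e₁ → U → T)
    (βU : Mid e₁ e₂ → N → U) (x : AeT e₂) (n : N) : T :=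
  β₁ (AeT.inclusion h.2 x) (βU (Mid.self h.1 h₂) n)

namespace IsBalancedTensor

lemma nestedTensor (hβ₁ : IsBalancedTensor A (Corner e₁ h₁) (AeT e₁) U T β₁)
    (hβU : IsBalancedTensor (Corner e₁ h₁) (Corner e₂ h₂) (Mid e₁ e₂) N U βU)
    (h : e₂ ∈ cornerSub e₁) :
    IsBalancedTensor A (Corner e₂ h₂) (AeT e₂) N T (nestedTensor h h₂ β₁ βU) where
  add_left x x' n := by simp only [_root_.nestedTensor, map_add, hβ₁.add_left]
  add_right x n n' := by simp only [_root_.nestedTensor, hβU.add_right, hβ₁.add_right]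
  smul_left r x n := by simp only [_root_.nestedTensor, map_smul, hβ₁.smul_left]
  balanced s x n := by
    simp only [_root_.nestedTensor]
    rw [AeT.inclusion_op_smul (h₁ := h₁) h, hβ₁.balanced, ← hβU.smul_left,
      Mid.inclusion_smul_self h, hβU.balanced]

lemma apply_self_eq_nestedTensor (hβ₁ : IsBalancedTensor A (Corner e₁ h₁) (AeT e₁) U T β₁)
    (hβU : IsBalancedTensor (Corner e₁ h₁) (Corner e₂ h₂) (Mid e₁ e₂) N U βU)
    (h : e₂ ∈ cornerSub e₁) (m : Mid e₁ e₂) (n : N) :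
    β₁ (AeT.self h₁) (βU m n) = _root_.nestedTensor h h₂ β₁ βU (Mid.toAeT m) n := by
  conv_lhs => rw [← Mid.toCorner_smul_self (h₁ := h₁) (h₂ := h₂) h m]
  rw [hβU.smul_left, ← hβ₁.balanced, AeT.op_toCorner_smul_self]
  rfl

end IsBalancedTensor

namespace IsUnivTensor

lemma hom_ext_nestedTensor (hU : IsUnivTensor (Corner e₁ h₁) (Corner e₂ h₂) (Mid e₁ e₂) N U βU)
    (hT : IsUnivTensor A (Corner e₁ h₁) (AeT e₁) U T β₁) (h : e₂ ∈ cornerSub e₁)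
    {T' : Type} [AddCommGroup T'] [Module A T'] {f g : T →ₗ[A] T'}
    (hfg : ∀ x n,
      f (_root_.nestedTensor h h₂ β₁ βU x n) = g (_root_.nestedTensor h h₂ β₁ βU x n)) :
    f = g :=
  hT.hom_ext_self <| hU.hom_ext fun m n => Subtype.ext <| by
    simp only [LinearMap.comp_apply, cmap_val, IsBalancedTensor.selfMap_val,
      hT.1.apply_self_eq_nestedTensor hU.1 h]
    exact hfg _ _

theorem nestedTensor (hU : IsUnivTensor (Corner e₁ h₁) (Corner e₂ h₂) (Mid e₁ e₂) N U βU)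
    (hT : IsUnivTensor A (Corner e₁ h₁) (AeT e₁) U T β₁) (h : e₂ ∈ cornerSub e₁) :
    IsUnivTensor A (Corner e₂ h₂) (AeT e₂) N T (nestedTensor h h₂ β₁ βU) := by
  refine ⟨hT.1.nestedTensor hU.1 h, fun T' _ _ γ hγ => ?_⟩
  let ρ := hU.lift (hγ.isBalancedTensor_restrictMid h₁)
  have hψ : ∀ x n,
      hT.lift (isBalancedTensor_smul_val ρ) (_root_.nestedTensor h h₂ β₁ βU x n) = γ x n := by
    intro x n
    calc _ = x.1 • γ (Mid.toAeT (Mid.self h.1 h₂)) n := by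
          simp only [_root_.nestedTensor, lift_apply, IsBalancedTensor.restrictMid, ρ]
          rfl
      _ = γ x n := by
          rw [← hγ.smul_left]
          exact congrArg (γ · n) (Subtype.ext (AeT.memAe x))
  exact ⟨_, hψ, fun f hf => hU.hom_ext_nestedTensor hT h fun x n => (hf x n).trans (hψ x n).symm⟩

end IsUnivTensor

end Nested

theorem stmt10_general {A : Type} [Ring A]
    (e1 e2 : A) (h1 : e1 * e1 = e1) (h2 : e2 * e2 = e2)
    (h12 : e1 * e2 * e1 = e2) :
    -- (i) localisation composes: e₂(e₁ M) = e₂ M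
    (∀ (M : Type) [AddCommGroup M] [Module A M],
      (cornerModSub e2 M : Set M) ⊆ (cornerModSub e1 M : Set M)) ∧
    -- (ii) globalisation composes:
    -- Ae₂ ⊗_{e₂Ae₂} N ≅ Ae₁ ⊗_{e₁Ae₁} (e₁Ae₂ ⊗_{e₂Ae₂} N)
    (∀ (N : Type) [AddCommGroup N] [Module (Corner e2 h2) N]
      (U : Type) [AddCommGroup U] [Module (Corner e1 h1) U]
      (βU : Mid e1 e2 → N → U),
      IsUnivTensor (Corner e1 h1) (Corner e2 h2) (Mid e1 e2) N U βU →
      ∀ (T2 : Type) [AddCommGroup T2] [Module A T2] (β2 : AeT e2 → N → T2),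
        IsUnivTensor A (Corner e2 h2) (AeT e2) N T2 β2 →
      ∀ (T1 : Type) [AddCommGroup T1] [Module A T1] (β1 : AeT e1 → U → T1),
        IsUnivTensor A (Corner e1 h1) (AeT e1) U T1 β1 →
        Nonempty (T2 ≃ₗ[A] T1)) := by
  have h : e2 ∈ cornerSub e1 := h12 ▸ mul_mul_mem_cornerSub h1 e2
  refine ⟨fun M _ _ => cornerModSub_le_of_mul_eq h.1 M, ?_⟩
  intro N _ _ U _ _ βU hU T2 _ _ β2 hT2 T1 _ _ β1 hT1
  exact ⟨hT2.linearEquiv (hU.nestedTensor hT1 h)⟩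

/-- Let `A` be an algebra over a field `k` with idempotents `e₁, e₂`
such that the multiplication maps `A eᵢ ⊗_{eᵢAeᵢ} eᵢA → A eᵢ A` are bijective, and
`0 ⊂ Ae₂A ⊂ Ae₁A ⊂ A` with `e₂ ∈ e₁Ae₁`. Then localisation composes: `e₂(e₁M) = e₂M`
(for every `A`-module `M`, the subset `e₂M ⊆ M` is contained in `e₁M`, with the same
`e₂Ae₂`-action by multiplication); and globalisation composes:
`Ae₂ ⊗_{e₂Ae₂} N ≅ Ae₁ ⊗_{e₁Ae₁} (e₁Ae₂ ⊗_{e₂Ae₂} N)`. -/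
theorem stmt10 {k A : Type} [Field k] [Ring A] [Algebra k A]
    (e1 e2 : A) (h1 : e1 * e1 = e1) (h2 : e2 * e2 = e2)
    (h12 : e1 * e2 * e1 = e2)
    -- the multiplication maps A eᵢ ⊗_{eᵢ A eᵢ} eᵢ A → A eᵢ A are bijective
    (hmult1 : ∀ (T : Type) [AddCommGroup T] [Module A T] (β : AeT e1 → Mid e1 1 → T),
      IsUnivTensor A (Corner e1 h1) (AeT e1) (Mid e1 1) T β →
      ∀ φ : T →ₗ[A] A, (∀ x y, φ (β x y) = x.1 * y.1) →
        Function.Injective φ ∧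
          LinearMap.range φ = Submodule.span A {z : A | ∃ b, z = e1 * b})
    (hmult2 : ∀ (T : Type) [AddCommGroup T] [Module A T] (β : AeT e2 → Mid e2 1 → T),
      IsUnivTensor A (Corner e2 h2) (AeT e2) (Mid e2 1) T β →
      ∀ φ : T →ₗ[A] A, (∀ x y, φ (β x y) = x.1 * y.1) →
        Function.Injective φ ∧
          LinearMap.range φ = Submodule.span A {z : A | ∃ b, z = e2 * b}) :
    -- (i) localisation composes: e₂(e₁ M) = e₂ M
    (∀ (M : Type) [AddCommGroup M] [Module A M],
      (cornerModSub e2 M : Set M) ⊆ (cornerModSub e1 M : Set M)) ∧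
    -- (ii) globalisation composes:
    -- Ae₂ ⊗_{e₂Ae₂} N ≅ Ae₁ ⊗_{e₁Ae₁} (e₁Ae₂ ⊗_{e₂Ae₂} N)
    (∀ (N : Type) [AddCommGroup N] [Module (Corner e2 h2) N]
      (U : Type) [AddCommGroup U] [Module (Corner e1 h1) U]
      (βU : Mid e1 e2 → N → U),
      IsUnivTensor (Corner e1 h1) (Corner e2 h2) (Mid e1 e2) N U βU →
      ∀ (T2 : Type) [AddCommGroup T2] [Module A T2] (β2 : AeT e2 → N → T2),
        IsUnivTensor A (Corner e2 h2) (AeT e2) N T2 β2 →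
      ∀ (T1 : Type) [AddCommGroup T1] [Module A T1] (β1 : AeT e1 → U → T1),
        IsUnivTensor A (Corner e1 h1) (AeT e1) U T1 β1 →
        Nonempty (T2 ≃ₗ[A] T1)) :=
  stmt10_general e1 e2 h1 h2 h12
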